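/- Fix a real α > 1 and let F be a function in the class P of Pick Argument Lessening functions satisfying F(z)^{α+1} = F(z) + z − 1 on H (principal power). Then for every z ∈ H the number ψ(z) := F(z)^α lies in the upper half-plane H, and Arg(ψ(z) − 1) ≤ Arg(z − 1). -/

import Mathlib

/-!
Write θ(z) = arg F(z) ∈ (0, π). Since Im F(z)^{α+1} = Im F(z) + Im z > 0, the continuous function
θ never takes the value π/(α+1) on the connected set H; as F(z) → F(1) = 1 when z → 1, θ takes
values near 0, so θ < π/(α+1) on all of H. Hence 0 < αθ < π and ψ = F^α lies in H. Finally the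
equation gives ψ − 1 = (z − 1)/F, so Arg(ψ − 1) = Arg(z − 1) − θ ≤ Arg(z − 1).
-/

/- The upper half-plane H = {z : ℂ | Im z > 0}. -/
def UHP : Set ℂ := {z : ℂ | 0 < z.im}

/- The half-axis [1, ∞) viewed inside ℂ. -/
def posRay : Set ℂ := {z : ℂ | z.im = 0 ∧ 1 ≤ z.re}

/-- The class P of Pick Argument Lessening functions. -/
structure IsPal (φ : ℂ → ℂ) : Prop where
  holo : DifferentiableOn ℂ φ UHP
  mapsUHP : ∀ z ∈ UHP, 0 < (φ z).im
  cont : ContinuousOn φ (UHP ∪ posRay)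
  realOnRay : ∀ z ∈ posRay, (φ z).im = 0
  fix_one : φ 1 = 1

open Complex Real Set Filter Topology

theorem IsPreconnected.forall_lt_of_forall_ne {X α : Type*} [TopologicalSpace X] [LinearOrder α]
    [TopologicalSpace α] [OrderClosedTopology α] {s : Set X} (hs : IsPreconnected s)
    {f : X → α} (hf : ContinuousOn f s) {c : α} (hne : ∀ x ∈ s, f x ≠ c) {x₀ : X}
    (hx₀ : x₀ ∈ s) (hlt : f x₀ < c) : ∀ x ∈ s, f x < c := by
  intro x hx
  by_contra! hle
  obtain ⟨y, hy, hyc⟩ := hs.intermediate_value hx₀ hx hf ⟨hlt.le, hle⟩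
  exact hne y hy hyc

namespace Complex

theorem arg_mem_Ioo_of_im_pos {z : ℂ} (hz : 0 < z.im) : arg z ∈ Ioo 0 π :=
  ⟨(arg_nonneg_iff.2 hz.le).lt_of_ne fun h ↦ hz.ne' (arg_eq_zero_iff.1 h.symm).2,
    arg_lt_pi_iff.2 (Or.inr hz.ne')⟩

theorem arg_div_of_im_pos {a b : ℂ} (ha : 0 < a.im) (hb : 0 < b.im) :
    arg (a / b) = arg a - arg b := by
  obtain ⟨ha₀, -⟩ := arg_mem_Ioo_of_im_pos ha
  obtain ⟨hb₀, hbπ⟩ := arg_mem_Ioo_of_im_pos hb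
  have harg_inv : arg b⁻¹ = -arg b := by rw [arg_inv, if_neg hbπ.ne]
  have ha0 : a ≠ 0 := fun h ↦ ha.ne' (by simp [h])
  have hb0 : b ≠ 0 := fun h ↦ hb.ne' (by simp [h])
  rw [div_eq_mul_inv, arg_mul ha0 (inv_ne_zero hb0), harg_inv, sub_eq_add_neg]
  rw [harg_inv]
  constructor <;> linarith [arg_le_pi a]

theorem sin_arg_mul_pos_of_im_cpow_pos {w : ℂ} {c : ℝ} (h : 0 < (w ^ (c : ℂ)).im) :
    0 < Real.sin (arg w * c) := by
  rw [cpow_ofReal_im] at h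
  exact pos_of_mul_pos_right h (Real.rpow_nonneg (norm_nonneg w) c)

theorem im_cpow_ofReal_pos {w : ℂ} (hw : w ≠ 0) {c : ℝ} (h : arg w * c ∈ Ioo 0 π) :
    0 < (w ^ (c : ℂ)).im := by
  rw [cpow_ofReal_im]
  exact mul_pos (Real.rpow_pos_of_pos (norm_pos_iff.2 hw) c) (Real.sin_pos_of_pos_of_lt_pi h.1 h.2)

theorem cpow_sub_one_eq_div {w z s : ℂ} (hw : w ≠ 0) (h : w ^ (s + 1) = w + z - 1) :
    w ^ s - 1 = (z - 1) / w := by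
  rw [cpow_add _ _ hw, cpow_one] at h
  field_simp
  linear_combination h

end Complex

namespace IsPal

variable {φ : ℂ → ℂ} (hφ : IsPal φ)
include hφ

theorem ne_zero {z : ℂ} (hz : z ∈ UHP) : φ z ≠ 0 :=
  fun h ↦ (hφ.mapsUHP z hz).ne' (by simp [h])

theorem continuousOn_arg : ContinuousOn (fun z ↦ arg (φ z)) UHP := fun z hz ↦
  (continuousAt_arg (mem_slitPlane_iff.2 (Or.inr (hφ.mapsUHP z hz).ne'))).comp_continuousWithinAt
    (hφ.holo z hz).continuousWithinAt

theorem exists_arg_lt {ε : ℝ} (hε : 0 < ε) : ∃ z ∈ UHP, arg (φ z) < ε := by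
  have hlim : Tendsto φ (𝓝[UHP] 1) (𝓝 1) := by
    simpa [hφ.fix_one] using
      ((hφ.cont 1 (Or.inr ⟨one_im, le_rfl⟩)).mono subset_union_left).tendsto
  have harg : Tendsto (fun z ↦ arg (φ z)) (𝓝[UHP] 1) (𝓝 0) := by
    have := (continuousAt_arg (by simp : (1 : ℂ) ∈ slitPlane)).tendsto.comp hlim
    rwa [arg_one] at this
  have : (𝓝[UHP] (1 : ℂ)).NeBot :=
    mem_closure_iff_nhdsWithin_neBot.1 (by simp [UHP, closure_setOfPred_lt_im])
  obtain ⟨z, hzε, hz⟩ := ((harg.eventually (gt_mem_nhds hε)).and self_mem_nhdsWithin).exists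
  exact ⟨z, hz, hzε⟩

theorem arg_lt_pi_div_of_im_cpow_pos {β : ℝ} (hβ : 0 < β)
    (hpos : ∀ z ∈ UHP, 0 < (φ z ^ (β : ℂ)).im) : ∀ z ∈ UHP, arg (φ z) < π / β := by
  have hne : ∀ z ∈ UHP, arg (φ z) ≠ π / β := by
    intro z hz h
    have hsin := sin_arg_mul_pos_of_im_cpow_pos (hpos z hz)
    rw [h, div_mul_cancel₀ _ hβ.ne', Real.sin_pi] at hsin
    exact hsin.false
  obtain ⟨z₀, hz₀, hlt⟩ := hφ.exists_arg_lt (div_pos pi_pos hβ)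
  exact (convex_halfSpace_im_gt 0).isPreconnected.forall_lt_of_forall_ne hφ.continuousOn_arg
    hne hz₀ hlt

end IsPal

/-- if F ∈ P satisfies F(z)^{α+1} = F(z) + z − 1 on H, then
ψ(z) = F(z)^α lies in H for z ∈ H, and Arg(ψ(z) − 1) ≤ Arg(z − 1). -/
theorem psi_in_upper_half_plane (α : ℝ) (hα : 1 < α) (F : ℂ → ℂ) (hF : IsPal F)
    (heq : ∀ z ∈ UHP, F z ^ (((α + 1 : ℝ)) : ℂ) = F z + z - 1) :
    ∀ z ∈ UHP,
      0 < (F z ^ ((α : ℝ) : ℂ)).im ∧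
      Complex.arg (F z ^ ((α : ℝ) : ℂ) - 1) ≤ Complex.arg (z - 1) := by
  intro z hz
  have hβ : 0 < α + 1 := by linarith
  have hθ := arg_mem_Ioo_of_im_pos (hF.mapsUHP z hz)
  have hθβ : arg (F z) < π / (α + 1) := hF.arg_lt_pi_div_of_im_cpow_pos hβ
    (fun w hw ↦ by rw [heq w hw]; simpa using add_pos (hF.mapsUHP w hw) hw) z hz
  have hαθ : arg (F z) * α < π := calc
    arg (F z) * α < π / (α + 1) * α := by gcongr
    _ < π := by rw [div_mul_eq_mul_div, div_lt_iff₀ hβ]; nlinarith [pi_pos]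
  refine ⟨im_cpow_ofReal_pos (hF.ne_zero hz) ⟨mul_pos hθ.1 (by linarith), hαθ⟩, ?_⟩
  have hz₁ : 0 < (z - 1).im := by rw [sub_im, one_im, sub_zero]; exact hz
  rw [cpow_sub_one_eq_div (hF.ne_zero hz) (by exact_mod_cast heq z hz),
    arg_div_of_im_pos hz₁ (hF.mapsUHP z hz)]
  linarith [hθ.1]
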